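/- In D_n', there is no induced directed cycle of odd length at least 5. -/

import Mathlib

/-!
Colour each edge of the cycle by its sign. An odd cycle cannot alternate colours, so two
consecutive edges `f i → f (i+1) → f (i+2)` have the same sign. Concatenating the underlying
walks of `D_n` gives a walk whose length is `≡ 2` (two positive edges) or `≡ 1` (two negative
edges) mod 3 between `f i` and `f (i+2)`, which is exactly a chord `f (i+2) → f i` of `D_n'`.
For a cycle of length at least 5 this chord is not a cycle edge, so the cycle is not induced.
-/

/-- Vertex set of the digraph `D (n+1)` from the paper (`Vtx n` = vertices of `D_{n+1}`). -/
def Vtx : ℕ → Type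
  | 0 => Unit
  | (n+1) => (Fin (n+1) × Vtx n) ⊕ ((i : Fin (n+1)) → Vtx n)

/-- Edge relation of `D_{n+1}`. -/
def DEdge : (n : ℕ) → Vtx n → Vtx n → Prop
  | 0, _, _ => False
  | (n+1), Sum.inl (i, x), Sum.inl (j, y) => i = j ∧ DEdge n x y
  | (n+1), Sum.inl (i, x), Sum.inr T => T i = x
  | (_+1), Sum.inr _, _ => False

/-- There is a directed walk of length `k` from `u` to `v`. -/
def WalkLen {V : Type*} (E : V → V → Prop) (u v : V) (k : ℕ) : Prop :=
  ∃ f : Fin (k+1) → V, f 0 = u ∧ f (Fin.last k) = v ∧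
    ∀ i : Fin k, E (f i.castSucc) (f i.succ)

/-- `l` is a directed path (as a list of distinct vertices) from `u` to `v`. -/
def IsDPath {V : Type*} (E : V → V → Prop) (u v : V) (l : List V) : Prop :=
  l.Chain' E ∧ l.Nodup ∧ l.head? = some u ∧ l.getLast? = some v

/-- Positive edges of `D'`. -/
def PosE {V : Type*} (E : V → V → Prop) (u v : V) : Prop :=
  ∃ k, k % 3 = 1 ∧ WalkLen E u v k

/-- Negative edges of `D'`. -/
def NegE {V : Type*} (E : V → V → Prop) (u v : V) : Prop :=
  ∃ k, k % 3 = 2 ∧ WalkLen E v u k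

/-- Edge relation of `D_{n+1}'`. -/
def DEdge' (n : ℕ) (u v : Vtx n) : Prop :=
  PosE (DEdge n) u v ∨ NegE (DEdge n) u v

/-- Underlying undirected graph of a digraph. -/
def underSG {V : Type*} (E : V → V → Prop) : SimpleGraph V :=
  SimpleGraph.fromRel E

/-- `G_{n+1}`, the underlying undirected graph of `D_{n+1}'`. -/
def Gn (n : ℕ) : SimpleGraph (Vtx n) := underSG (DEdge' n)

/-- A digraph is acyclic iff no vertex lies on a directed cycle. -/
def DAcyclic {V : Type*} (E : V → V → Prop) : Prop :=
  ∀ v : V, ¬ Relation.TransGen E v v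

/-- `k`-dicolorability. -/
def Dicolorable {V : Type*} (E : V → V → Prop) (k : ℕ) : Prop :=
  ∃ f : V → Fin k, ∀ c : Fin k,
    DAcyclic (fun a b => E a b ∧ f a = c ∧ f b = c)

/-- `D` has an induced directed cycle of odd length at least 5. -/
def HasInducedOddCycle {V : Type*} (E : V → V → Prop) : Prop :=
  ∃ m : ℕ, 5 ≤ m ∧ Odd m ∧ ∃ f : ZMod m → V, Function.Injective f ∧
    (∀ i, E (f i) (f (i+1))) ∧ (∀ i j, E (f i) (f j) → j = i + 1)

section WalkLen

variable {V : Type*} {E : V → V → Prop}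

lemma walkLen_zero {u v : V} : WalkLen E u v 0 ↔ u = v := by
  constructor
  · rintro ⟨f, rfl, rfl, -⟩
    rfl
  · rintro rfl
    exact ⟨fun _ => u, rfl, rfl, fun i => i.elim0⟩

lemma walkLen_succ {u v : V} {k : ℕ} :
    WalkLen E u v (k + 1) ↔ ∃ w, E u w ∧ WalkLen E w v k := by
  constructor
  · rintro ⟨f, rfl, rfl, hf⟩
    refine ⟨f 1, hf 0, fun i => f i.succ, rfl, congrArg f (Fin.succ_last k), fun i => ?_⟩
    simpa only [Fin.succ_castSucc] using hf i.succ
  · rintro ⟨w, huw, f, rfl, rfl, hf⟩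
    refine ⟨Fin.cons u f, rfl, by rw [← Fin.succ_last, Fin.cons_succ], fun i => ?_⟩
    cases i using Fin.cases with
    | zero => exact huw
    | succ j => simpa only [← Fin.succ_castSucc, Fin.cons_succ] using hf j

lemma WalkLen.trans {u v w : V} {k l : ℕ} (huv : WalkLen E u v k) (hvw : WalkLen E v w l) :
    WalkLen E u w (k + l) := by
  induction k generalizing u with
  | zero =>
    rw [walkLen_zero.1 huv, Nat.zero_add]
    exact hvw
  | succ k ih =>
    obtain ⟨x, hux, hxv⟩ := walkLen_succ.1 huv
    rw [Nat.add_right_comm, walkLen_succ]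
    exact ⟨x, hux, ih hxv⟩

end WalkLen

section Signs

variable {V : Type*} {E : V → V → Prop} {u v w : V}

lemma PosE.negE_of_posE (huv : PosE E u v) (hvw : PosE E v w) : NegE E w u := by
  obtain ⟨k, hk, huv⟩ := huv
  obtain ⟨l, hl, hvw⟩ := hvw
  exact ⟨k + l, by omega, huv.trans hvw⟩

lemma NegE.posE_of_negE (huv : NegE E u v) (hvw : NegE E v w) : PosE E w u := by
  obtain ⟨k, hk, hvu⟩ := huv
  obtain ⟨l, hl, hwv⟩ := hvw
  exact ⟨l + k, by omega, hwv.trans hvu⟩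

end Signs

lemma ZMod.exists_iff_add_one_of_odd {m : ℕ} (hm : Odd m) (p : ZMod m → Prop) :
    ∃ i, p i ↔ p (i + 1) := by
  by_contra halt
  have hflip (i : ZMod m) : p (i + 1) ↔ ¬p i := (not_iff.1 (not_exists.1 halt i)).symm
  have hflip₂ (i : ZMod m) : p (i + 2) ↔ p i := by
    rw [← one_add_one_eq_two, ← add_assoc, hflip, hflip, not_not]
  have heven (k : ℕ) : p ((2 * k : ℕ) : ZMod m) ↔ p 0 := by
    induction k with
    | zero => simp
    | succ k ih => rw [Nat.mul_succ, Nat.cast_add, Nat.cast_ofNat, hflip₂, ih]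
  obtain ⟨j, rfl⟩ := hm
  have hcontra : p 0 ↔ ¬p 0 := by
    conv_lhs => rw [← ZMod.natCast_self (2 * j + 1)]
    rw [Nat.cast_succ, hflip, heven]
  exact iff_not_self hcontra

theorem not_hasInducedOddCycle_posE_or_negE {V : Type*} (E : V → V → Prop) :
    ¬HasInducedOddCycle (fun u v => PosE E u v ∨ NegE E u v) := by
  rintro ⟨m, hm, hodd, f, -, hcyc, hind⟩
  obtain ⟨i, hsame⟩ := ZMod.exists_iff_add_one_of_odd hodd (fun i => PosE E (f i) (f (i + 1)))
  have hchord : PosE E (f (i + 2)) (f i) ∨ NegE E (f (i + 2)) (f i) := by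
    have h₂ := hcyc (i + 1)
    rw [add_assoc, one_add_one_eq_two] at hsame h₂
    by_cases hpos : PosE E (f i) (f (i + 1))
    · exact .inr (hpos.negE_of_posE (hsame.1 hpos))
    · exact .inl (((hcyc i).resolve_left hpos).posE_of_negE (h₂.resolve_left (hsame.not.1 hpos)))
  have hthree : ((3 : ℕ) : ZMod m) = 0 := by
    have := hind _ _ hchord
    push_cast
    linear_combination -this
  have := Nat.le_of_dvd three_pos ((ZMod.natCast_eq_zero_iff 3 m).1 hthree)
  omega

/-- `D_n'` has no induced directed cycle of odd length at least 5. -/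
theorem Dn'_no_induced_odd_cycle (n : ℕ) : ¬ HasInducedOddCycle (DEdge' n) :=
  not_hasInducedOddCycle_posE_or_negE (DEdge n)
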